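/- arXiv:2208.12626 — 3 statements merged into one kernel-verified Lean document; each statement's English description precedes it below -/
import Mathlib

section
/- Let n ≥ 2 and assume condition (ON). Then the graph G(V) is connected if and only if one of the following holds: (a) n = 2 and K has exactly 4 elements; (b) n = 3 and K does not have exactly 4 elements; (c) n ≥ 4. -/
/-!
Vertices are the lines `K ∙ v` with `Ψ(v, v) ≠ 0`. As `τ ≠ id`, polarization makes every
subspace on which `Ψ(x, x)` vanishes totally isotropic, hence of dimension at most `n / 2`. For
`n ≥ 4` this gives, for anisotropic `u` and `v`, an anisotropic `z ⊥ v` and then an anisotropic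
`w ⊥ u, z`: a path `u — w — z — v`.

If `|K| = 4`, every nonzero norm `x * τ x` is `1`, so `Ψ(v, v)` is the parity of the number of
nonzero coordinates of `v`. For `n = 2` the only vertices are then the two (adjacent) coordinate
lines; for `n = 3` the coordinate lines are closed under adjacency, while `K ∙ (1, 1, 1)` is a
vertex. If `|K| ≠ 4` and `n = 2`, some `a ≠ 0` has `1 + a * τ a ≠ 0`, and `K ∙ (1, a)` is cut off
from the coordinate lines; for `n = 3`, an explicit choice of vectors joins every vertex to
`K ∙ e₀` by a path of length at most three.
-/

namespace FramePaper

variable {K : Type*} [Field K]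

/-- The standard Hermitian form `Ψ(v,w) = ∑ i, v i * τ (w i)` on `Fin n → K`. -/
def Psi (τ : K → K) {n : ℕ} (v w : Fin n → K) : K :=
  ∑ i, v i * τ (w i)

lemma Psi_add_left (τ : K → K) {n : ℕ} (a b w : Fin n → K) :
    Psi τ (a + b) w = Psi τ a w + Psi τ b w := by
  simp [Psi, add_mul, Finset.sum_add_distrib]

lemma Psi_smul_left (τ : K → K) {n : ℕ} (c : K) (a w : Fin n → K) :
    Psi τ (c • a) w = c * Psi τ a w := by
  simp [Psi, Finset.mul_sum, mul_assoc]

/-- The orthogonal complement `S^⊥ = {v | ∀ s ∈ S, Ψ(v,s) = 0}`. -/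
def perp (τ : K → K) {n : ℕ} (S : Submodule K (Fin n → K)) :
    Submodule K (Fin n → K) where
  carrier := {v | ∀ s ∈ S, Psi τ v s = 0}
  add_mem' := by
    intro a b ha hb
    show ∀ s ∈ S, Psi τ (a + b) s = 0
    intro s hs
    rw [Psi_add_left, ha s hs, hb s hs, add_zero]
  zero_mem' := by
    show ∀ s ∈ S, Psi τ 0 s = 0
    intro s hs
    simp [Psi]
  smul_mem' := by
    intro c a ha
    show ∀ s ∈ S, Psi τ (c • a) s = 0
    intro s hs
    rw [Psi_smul_left, ha s hs, mul_zero]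

/-- A subspace `S` is non-degenerate iff `S ⊓ S^⊥ = ⊥`. -/
def Nondeg (τ : K → K) {n : ℕ} (S : Submodule K (Fin n → K)) : Prop :=
  S ⊓ perp τ S = ⊥

/-- Vertices of `G(V)`: the `1`-dimensional non-degenerate subspaces. -/
def IsVertex (τ : K → K) {n : ℕ} (S : Submodule K (Fin n → K)) : Prop :=
  Module.finrank K S = 1 ∧ Nondeg τ S

/-- The graph `G(V)` on the `1`-dimensional non-degenerate subspaces of `V = Fin n → K`,
with `S, W` adjacent iff `S ≠ W` and `Ψ(s,w) = 0` for all `s ∈ S`, `w ∈ W`. -/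
def FrameGraph (τ : K →+* K) (hτ2 : ∀ x, τ (τ x) = x) (n : ℕ) :
    SimpleGraph {S : Submodule K (Fin n → K) // IsVertex (⇑τ) S} where
  Adj S W := S ≠ W ∧ ∀ s ∈ S.1, ∀ w ∈ W.1, Psi (⇑τ) s w = 0
  symm := ⟨by
    rintro S W ⟨hne, h⟩
    refine ⟨hne.symm, fun w hw s hs => ?_⟩
    have key : Psi (⇑τ) w s = τ (Psi (⇑τ) s w) := by
      simp only [Psi, map_sum, map_mul, hτ2]
      exact Finset.sum_congr rfl fun i _ => mul_comm _ _
    rw [key, h s hs w hw, map_zero]⟩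
  loopless := ⟨fun S h => h.1 rfl⟩

section

variable {τ : K →+* K} {n : ℕ}

lemma Psi_add_right (v a b : Fin n → K) :
    Psi (⇑τ) v (a + b) = Psi (⇑τ) v a + Psi (⇑τ) v b := by
  simp [Psi, mul_add, Finset.sum_add_distrib]

lemma Psi_smul_right (c : K) (v a : Fin n → K) :
    Psi (⇑τ) v (c • a) = τ c * Psi (⇑τ) v a := by
  simp only [Psi, Pi.smul_apply, smul_eq_mul, map_mul, Finset.mul_sum]
  exact Finset.sum_congr rfl fun i _ => by ring

@[simp]
lemma Psi_zero_left (w : Fin n → K) : Psi (⇑τ) 0 w = 0 := by simp [Psi]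

lemma Psi_swap (hτ2 : ∀ x, τ (τ x) = x) (v w : Fin n → K) :
    Psi (⇑τ) w v = τ (Psi (⇑τ) v w) := by
  simp only [Psi, map_sum, map_mul, hτ2]
  exact Finset.sum_congr rfl fun i _ => mul_comm _ _

lemma Psi_single_left (i : Fin n) (w : Fin n → K) :
    Psi (⇑τ) (Pi.single i 1) w = τ (w i) := by
  simp [Psi, Pi.single_apply]

lemma Psi_single_right (w : Fin n → K) (i : Fin n) : Psi (⇑τ) w (Pi.single i 1) = w i := by
  simp [Psi, Pi.single_apply]

lemma Psi_add_smul_self (x y : Fin n → K) (c : K) :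
    Psi (⇑τ) (x + c • y) (x + c • y) = Psi (⇑τ) x x + τ c * Psi (⇑τ) x y +
      c * Psi (⇑τ) y x + c * τ c * Psi (⇑τ) y y := by
  rw [Psi_add_left, Psi_add_right, Psi_add_right, Psi_smul_left, Psi_smul_left,
    Psi_smul_right, Psi_smul_right]
  ring

/-- Polarization: `τ` moves some `c`, and `Ψ(x + y, x + y)`, `Ψ(x + c • y, x + c • y)` together
determine `Ψ(x, y)`. -/
lemma Psi_eq_zero_of_forall_self (hτne : (⇑τ : K → K) ≠ id) {S : Submodule K (Fin n → K)}
    (h : ∀ x ∈ S, Psi (⇑τ) x x = 0) {x y : Fin n → K} (hx : x ∈ S) (hy : y ∈ S) :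
    Psi (⇑τ) x y = 0 := by
  obtain ⟨c, hc⟩ : ∃ c, τ c ≠ c := by
    by_contra! hc
    exact hτne (funext hc)
  have h1 := Psi_add_smul_self (τ := τ) x y 1
  have hc' := Psi_add_smul_self (τ := τ) x y c
  rw [h _ (S.add_mem hx (S.smul_mem _ hy)), h x hx, h y hy] at h1 hc'
  rw [map_one] at h1
  have : (τ c - c) * Psi (⇑τ) x y = 0 := by linear_combination c * h1 - hc'
  exact (mul_eq_zero.mp this).resolve_left (sub_ne_zero.mpr hc)

variable (τ n) in
def conjMap : (Fin n → K) →ₛₗ[τ] (Fin n → K) where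
  toFun v i := τ (v i)
  map_add' a b := by funext i; simp
  map_smul' c v := by funext i; simp

lemma conjMap_conjMap (hτ2 : ∀ x, τ (τ x) = x) (v : Fin n → K) :
    conjMap τ n (conjMap τ n v) = v :=
  funext fun i => hτ2 (v i)

lemma finrank_le_of_conjMap_mem (hτ2 : ∀ x, τ (τ x) = x) {S T : Submodule K (Fin n → K)}
    (h : ∀ x ∈ S, conjMap τ n x ∈ T) : Module.finrank K S ≤ Module.finrank K T := by
  let j : S →ₛₗ[τ] T := ((conjMap τ n).domRestrict S).codRestrict T fun x => h x x.2
  have hj : Function.Injective j := fun x y hxy => by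
    have h' : conjMap τ n (conjMap τ n x) = conjMap τ n (conjMap τ n y) :=
      congrArg (conjMap τ n ∘ Subtype.val) hxy
    rwa [conjMap_conjMap hτ2, conjMap_conjMap hτ2, SetLike.coe_eq_coe] at h'
  have hrank : Module.rank K S ≤ Module.rank K T :=
    rank_le_of_surjective_injective τ j.toAddMonoidHom (fun x => ⟨τ x, hτ2 x⟩) hj j.map_smulₛₗ
  exact Module.finrank_le_finrank_of_rank_le_rank (by simpa using hrank)
    (Module.rank_lt_aleph0 _ _)

lemma finrank_comap_conjMap (hτ2 : ∀ x, τ (τ x) = x) (S : Submodule K (Fin n → K)) :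
    Module.finrank K (S.comap (conjMap τ n)) = Module.finrank K S :=
  le_antisymm (finrank_le_of_conjMap_mem hτ2 fun _ hx => hx)
    (finrank_le_of_conjMap_mem hτ2 fun x hx => by
      simpa [Submodule.mem_comap, conjMap_conjMap hτ2] using hx)

lemma Psi_conjMap_right (hτ2 : ∀ x, τ (τ x) = x) (v w : Fin n → K) :
    Psi (⇑τ) v (conjMap τ n w) = w ⬝ᵥ v := by
  simp only [Psi, dotProduct, mul_comm (v _)]
  exact Finset.sum_congr rfl fun i _ => by rw [show conjMap τ n w i = τ (w i) from rfl, hτ2]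

lemma perp_eq_orthogonal (hτ2 : ∀ x, τ (τ x) = x) (S : Submodule K (Fin n → K)) :
    perp (⇑τ) S = (Matrix.toBilin' (1 : Matrix (Fin n) (Fin n) K)).orthogonal
      (S.comap (conjMap τ n)) := by
  ext v
  simp only [LinearMap.BilinForm.mem_orthogonal_iff, Matrix.toBilin'_apply', Matrix.one_mulVec,
    Submodule.mem_comap, ← Psi_conjMap_right hτ2 v]
  refine ⟨fun hv w hw => hv _ hw, fun hv s hs => ?_⟩
  rw [← conjMap_conjMap hτ2 s]
  exact hv _ (by rwa [conjMap_conjMap hτ2])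

lemma finrank_perp (hτ2 : ∀ x, τ (τ x) = x) (S : Submodule K (Fin n → K)) :
    Module.finrank K (perp (⇑τ) S) = n - Module.finrank K S := by
  rw [perp_eq_orthogonal hτ2, LinearMap.BilinForm.finrank_orthogonal
    (LinearMap.BilinForm.nondegenerate_toBilin'_of_det_ne_zero' _ (by simp)),
    finrank_comap_conjMap hτ2, Module.finrank_fin_fun]

lemma le_perp_perp (hτ2 : ∀ x, τ (τ x) = x) (S : Submodule K (Fin n → K)) :
    S ≤ perp (⇑τ) (perp (⇑τ) S) := fun x hx s hs => by
  rw [Psi_swap hτ2, hs x hx, map_zero]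

/-- If `perp U` were totally isotropic it would lie in its own orthogonal, which has dimension
`dim U ≤ dim (perp U)`; so `perp U` would equal `perp (perp U) ⊇ U`. -/
lemma exists_anisotropic_mem_perp (hτne : (⇑τ : K → K) ≠ id) (hτ2 : ∀ x, τ (τ x) = x)
    {U : Submodule K (Fin n → K)} (hU : 2 * Module.finrank K U ≤ n) {u : Fin n → K}
    (huU : u ∈ U) (hu : Psi (⇑τ) u u ≠ 0) : ∃ w ∈ perp (⇑τ) U, Psi (⇑τ) w w ≠ 0 := by
  by_contra! h
  have hle : perp (⇑τ) U ≤ perp (⇑τ) (perp (⇑τ) U) := fun x hx s hs =>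
    Psi_eq_zero_of_forall_self hτne h hx hs
  have hdim : Module.finrank K (perp (⇑τ) (perp (⇑τ) U)) ≤ Module.finrank K (perp (⇑τ) U) := by
    rw [finrank_perp hτ2, finrank_perp hτ2]
    omega
  have huW := le_perp_perp hτ2 U huU
  rw [← Submodule.eq_of_le_of_finrank_le hle hdim] at huW
  exact hu (h u huW)

lemma ne_zero_of_Psi_self_ne_zero {v : Fin n → K} (hv : Psi (⇑τ) v v ≠ 0) : v ≠ 0 := by
  rintro rfl
  exact hv (Psi_zero_left 0)

lemma isVertex_span_singleton {v : Fin n → K} (hv : Psi (⇑τ) v v ≠ 0) :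
    IsVertex (⇑τ) (K ∙ v) := by
  refine ⟨finrank_span_singleton (ne_zero_of_Psi_self_ne_zero hv), ?_⟩
  rw [Nondeg, Submodule.eq_bot_iff]
  rintro x ⟨hx, hxv⟩
  obtain ⟨c, rfl⟩ := Submodule.mem_span_singleton.mp hx
  have := hxv v (Submodule.mem_span_singleton_self v)
  rw [Psi_smul_left, mul_eq_zero] at this
  rw [this.resolve_right hv, zero_smul]

lemma Psi_single_self (i : Fin n) : Psi (⇑τ) (Pi.single i (1 : K)) (Pi.single i 1) ≠ 0 := by
  simp [Psi_single_left]

def lineOf {v : Fin n → K} (hv : Psi (⇑τ) v v ≠ 0) :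
    {S : Submodule K (Fin n → K) // IsVertex (⇑τ) S} :=
  ⟨K ∙ v, isVertex_span_singleton hv⟩

lemma exists_eq_lineOf (S : {S : Submodule K (Fin n → K) // IsVertex (⇑τ) S}) :
    ∃ v, ∃ hv : Psi (⇑τ) v v ≠ 0, S = lineOf hv := by
  obtain ⟨S, hS, hnd⟩ := S
  have hSne : S ≠ ⊥ := by
    rintro rfl
    simp at hS
  obtain ⟨v, hvS, hv0⟩ := Submodule.exists_mem_ne_zero_of_ne_bot hSne
  have hSv : S = K ∙ v := eq_span_singleton_of_mem_of_finrank_eq_one hS hvS hv0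
  refine ⟨v, fun hvv => hv0 ?_, Subtype.ext hSv⟩
  have hperp : v ∈ perp (⇑τ) S := fun s hs => by
    obtain ⟨c, rfl⟩ := Submodule.mem_span_singleton.mp (hSv ▸ hs)
    rw [Psi_smul_right, hvv, mul_zero]
  have hv : v ∈ S ⊓ perp (⇑τ) S := ⟨hvS, hperp⟩
  rwa [hnd, Submodule.mem_bot] at hv

lemma mem_span_singleton_of_lineOf_eq {v w : Fin n → K} {hv : Psi (⇑τ) v v ≠ 0}
    {hw : Psi (⇑τ) w w ≠ 0} (h : lineOf hv = lineOf hw) : v ∈ K ∙ w := by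
  rw [← show K ∙ v = K ∙ w from congrArg Subtype.val h]
  exact Submodule.mem_span_singleton_self v

lemma adj_lineOf_iff (hτ2 : ∀ x, τ (τ x) = x) {u w : Fin n → K} (hu : Psi (⇑τ) u u ≠ 0)
    (hw : Psi (⇑τ) w w ≠ 0) :
    (FrameGraph τ hτ2 n).Adj (lineOf hu) (lineOf hw) ↔ Psi (⇑τ) u w = 0 := by
  refine ⟨fun h => h.2 u (Submodule.mem_span_singleton_self u) w
    (Submodule.mem_span_singleton_self w), fun huw => ⟨fun h => ?_, ?_⟩⟩
  · obtain ⟨c, rfl⟩ := Submodule.mem_span_singleton.mp (mem_span_singleton_of_lineOf_eq h.symm)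
    rw [Psi_smul_right, mul_eq_zero, map_eq_zero] at huw
    rcases huw with rfl | huu
    · exact hw (by simp)
    · exact hu huu
  · rintro _ hs _ ht
    obtain ⟨a, rfl⟩ := Submodule.mem_span_singleton.mp hs
    obtain ⟨b, rfl⟩ := Submodule.mem_span_singleton.mp ht
    rw [Psi_smul_left, Psi_smul_right, huw, mul_zero, mul_zero]

lemma connected_of_forall_reachable_lineOf (hτ2 : ∀ x, τ (τ x) = x) {v₀ : Fin n → K}
    (hv₀ : Psi (⇑τ) v₀ v₀ ≠ 0)
    (h : ∀ v (hv : Psi (⇑τ) v v ≠ 0), (FrameGraph τ hτ2 n).Reachable (lineOf hv) (lineOf hv₀)) :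
    (FrameGraph τ hτ2 n).Connected := by
  refine (SimpleGraph.connected_iff_exists_forall_reachable _).mpr ⟨lineOf hv₀, fun S => ?_⟩
  obtain ⟨v, hv, rfl⟩ := exists_eq_lineOf S
  exact (h v hv).symm

lemma lineOf_eq_lineOf_single {v : Fin n → K} (hv : Psi (⇑τ) v v ≠ 0) {j : Fin n}
    (h : ∀ k ≠ j, v k = 0) : lineOf hv = lineOf (Psi_single_self (τ := τ) j) := by
  have hvj : v = v j • Pi.single j 1 := by
    funext k
    by_cases hk : k = j
    · simp [hk]
    · simp [hk, h k hk]
  have hj : v j ≠ 0 := fun h0 => ne_zero_of_Psi_self_ne_zero hv (by rw [hvj, h0, zero_smul])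
  refine Subtype.ext ?_
  change K ∙ v = K ∙ Pi.single j 1
  rw [hvj, Submodule.span_singleton_smul_eq (IsUnit.mk0 _ hj)]

lemma reachable_lineOf_single (hτ2 : ∀ x, τ (τ x) = x) (i j : Fin n) :
    (FrameGraph τ hτ2 n).Reachable (lineOf (Psi_single_self i)) (lineOf (Psi_single_self j)) := by
  rcases eq_or_ne i j with rfl | hij
  · rfl
  · exact ((adj_lineOf_iff hτ2 _ _).mpr (by simp [Psi_single_right, hij.symm])).reachable

/-- The neighbours of `K ∙ eᵢ` are the vertices with `i`-th coordinate zero, so under `hclosed`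
the coordinate lines form a union of components, which misses `K ∙ v`. -/
lemma not_connected_of_coordinate_lines_closed (hτ2 : ∀ x, τ (τ x) = x) (i : Fin n)
    (hclosed : ∀ w : Fin n → K, Psi (⇑τ) w w ≠ 0 → (∃ i, w i = 0) → ∃ j, ∀ k ≠ j, w k = 0)
    {v : Fin n → K} (hv : Psi (⇑τ) v v ≠ 0) (hv' : ∀ j, ∃ k ≠ j, v k ≠ 0) :
    ¬ (FrameGraph τ hτ2 n).Connected := by
  intro hconn
  have hcoord : ∀ X, Relation.ReflTransGen (FrameGraph τ hτ2 n).Adj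
      (lineOf (Psi_single_self i)) X → ∃ j, X = lineOf (Psi_single_self j) := by
    intro X hX
    induction hX with
    | refl => exact ⟨i, rfl⟩
    | @tail _ Y _ hadj ih =>
      obtain ⟨j, rfl⟩ := ih
      obtain ⟨w, hw, rfl⟩ := exists_eq_lineOf Y
      have hwj : w j = 0 := by
        simpa [Psi_single_left] using (adj_lineOf_iff hτ2 _ hw).mp hadj
      obtain ⟨j', hj'⟩ := hclosed w hw ⟨j, hwj⟩
      exact ⟨j', lineOf_eq_lineOf_single hw hj'⟩
  obtain ⟨j, hj⟩ := hcoord _ ((SimpleGraph.reachable_iff_reflTransGen _ _).mp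
    (hconn.preconnected (lineOf (Psi_single_self i)) (lineOf hv)))
  obtain ⟨k, hkj, hk⟩ := hv' j
  obtain ⟨c, hc⟩ := Submodule.mem_span_singleton.mp (mem_span_singleton_of_lineOf_eq hj)
  exact hk (by simp [← hc, hkj])

lemma reachable_lineOf_of_four_le (hτne : (⇑τ : K → K) ≠ id) (hτ2 : ∀ x, τ (τ x) = x)
    (hn : 4 ≤ n) {u v : Fin n → K} (hu : Psi (⇑τ) u u ≠ 0) (hv : Psi (⇑τ) v v ≠ 0) :
    (FrameGraph τ hτ2 n).Reachable (lineOf hu) (lineOf hv) := by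
  obtain ⟨z, hzv, hz⟩ := exists_anisotropic_mem_perp hτne hτ2 (U := K ∙ v)
    (by rw [finrank_span_singleton (ne_zero_of_Psi_self_ne_zero hv)]; omega)
    (Submodule.mem_span_singleton_self v) hv
  have hU : Module.finrank K ↥(K ∙ z ⊔ K ∙ u) ≤ 2 := by
    have := Submodule.finrank_add_le_finrank_add_finrank (K ∙ z) (K ∙ u)
    rwa [finrank_span_singleton (ne_zero_of_Psi_self_ne_zero hz),
      finrank_span_singleton (ne_zero_of_Psi_self_ne_zero hu)] at this
  obtain ⟨w, hwzu, hw⟩ := exists_anisotropic_mem_perp hτne hτ2 (U := K ∙ z ⊔ K ∙ u) (by omega)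
    (Submodule.mem_sup_right (Submodule.mem_span_singleton_self u)) hu
  have huw : Psi (⇑τ) u w = 0 := by
    rw [Psi_swap hτ2, hwzu u (Submodule.mem_sup_right (Submodule.mem_span_singleton_self u)),
      map_zero]
  have hwz : Psi (⇑τ) w z = 0 :=
    hwzu z (Submodule.mem_sup_left (Submodule.mem_span_singleton_self z))
  have hzv' : Psi (⇑τ) z v = 0 := hzv v (Submodule.mem_span_singleton_self v)
  exact ((adj_lineOf_iff hτ2 hu hw).mpr huw).reachable.trans
    (((adj_lineOf_iff hτ2 hw hz).mpr hwz).reachable.trans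
      ((adj_lineOf_iff hτ2 hz hv).mpr hzv').reachable)

lemma connected_of_four_le (hτne : (⇑τ : K → K) ≠ id) (hτ2 : ∀ x, τ (τ x) = x)
    (hn : 4 ≤ n) : (FrameGraph τ hτ2 n).Connected :=
  connected_of_forall_reachable_lineOf hτ2 (Psi_single_self ⟨0, by omega⟩) fun _ hv =>
    reachable_lineOf_of_four_le hτne hτ2 hn hv _

lemma card_eq_four_of_forall_sq_add_self_add_one (h2 : (2 : K) = 0)
    (hq : ∀ x : K, x ≠ 0 → x ≠ 1 → x * x + x + 1 = 0) {y : K} (hy0 : y ≠ 0) (hy1 : y ≠ 1) :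
    Nat.card K = 4 := by
  have hy : y * y + y + 1 = 0 := hq y hy0 hy1
  have huniv : ({0, 1, y, y + 1} : Set K) = Set.univ := by
    refine Set.eq_univ_of_forall fun x => ?_
    by_cases hx0 : x = 0
    · simp [hx0]
    by_cases hx1 : x = 1
    · simp [hx1]
    have : (x - y) * (x - (y + 1)) = 0 := by
      linear_combination hq x hx0 hx1 - hy + (y - x + y * y - x * y) * h2
    rcases mul_eq_zero.mp this with h | h
    · simp [sub_eq_zero.mp h]
    · simp [sub_eq_zero.mp h]
  have h10 : (1 : K) ≠ 0 := one_ne_zero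
  have hy10 : y + 1 ≠ 0 := fun h => hy1 (by linear_combination h - h2)
  have hy11 : y + 1 ≠ 1 := fun h => hy0 (by linear_combination h)
  have hyy : y ≠ y + 1 := fun h => h10 (by linear_combination -h)
  rw [← Set.ncard_univ, ← huniv, Set.ncard_insert_of_notMem (by simp [hy0.symm, hy10.symm]),
    Set.ncard_insert_of_notMem (by simp [hy1.symm, hy11.symm]), Set.ncard_pair hyy]

lemma two_eq_zero_of_card_eq_four (hcard : Nat.card K = 4) : (2 : K) = 0 := by
  have : Fintype K := @Fintype.ofFinite K (Nat.finite_of_card_ne_zero (by omega))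
  have h4 : ((Fintype.card K : ℕ) : K) = 0 := FiniteField.cast_card_eq_zero K
  rw [← Nat.card_eq_fintype_card, hcard] at h4
  have : (2 : K) * 2 = 0 := by linear_combination h4
  simpa using this

lemma sq_add_self_add_one_of_card_eq_four (hcard : Nat.card K = 4) {x : K} (hx0 : x ≠ 0)
    (hx1 : x ≠ 1) : x * x + x + 1 = 0 := by
  have : Fintype K := @Fintype.ofFinite K (Nat.finite_of_card_ne_zero (by omega))
  have hx3 := FiniteField.pow_card_sub_one_eq_one x hx0
  rw [← Nat.card_eq_fintype_card, hcard] at hx3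
  have : (x - 1) * (x * x + x + 1) = 0 := by linear_combination hx3
  exact (mul_eq_zero.mp this).resolve_left (sub_ne_zero.mpr hx1)

lemma exists_map_ne_self (hτne : (⇑τ : K → K) ≠ id) : ∃ y, τ y ≠ y := by
  by_contra! h
  exact hτne (funext h)

lemma eq_zero_or_eq_one_of_map_eq_self (hτne : (⇑τ : K → K) ≠ id) (hcard : Nat.card K = 4)
    {t : K} (ht : τ t = t) : t = 0 ∨ t = 1 := by
  by_contra! h
  have h2 := two_eq_zero_of_card_eq_four hcard
  have htt := sq_add_self_add_one_of_card_eq_four hcard h.1 h.2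
  refine hτne (funext fun x => ?_)
  by_cases hx0 : x = 0
  · simp [hx0]
  by_cases hx1 : x = 1
  · simp [hx1]
  have : (x - t) * (x - (t + 1)) = 0 := by
    linear_combination sq_add_self_add_one_of_card_eq_four hcard hx0 hx1 - htt +
      (t - x + t * t - x * t) * h2
  rcases mul_eq_zero.mp this with h | h
  · simp [sub_eq_zero.mp h, ht]
  · simp [sub_eq_zero.mp h, ht]

lemma mul_map_self_eq_one_of_card_eq_four (hτne : (⇑τ : K → K) ≠ id) (hτ2 : ∀ x, τ (τ x) = x)
    (hcard : Nat.card K = 4) {x : K} (hx : x ≠ 0) : x * τ x = 1 := by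
  have hfix : τ (x * τ x) = x * τ x := by rw [map_mul, hτ2, mul_comm]
  simpa [hx] using eq_zero_or_eq_one_of_map_eq_self hτne hcard hfix

/-- Every `x ∉ {0, 1}` has trace `x + τ x = 1` and norm `x * τ x = 1`, hence is a root of
`X² + X + 1`. -/
lemma card_eq_four_of_forall_map_eq_self (hτne : (⇑τ : K → K) ≠ id) (hτ2 : ∀ x, τ (τ x) = x)
    (h2 : (2 : K) = 0) (hfix : ∀ t : K, τ t = t → t = 0 ∨ t = 1) : Nat.card K = 4 := by
  obtain ⟨y, hy⟩ := exists_map_ne_self hτne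
  refine card_eq_four_of_forall_sq_add_self_add_one (y := y) h2 (fun x hx0 hx1 => ?_)
    (by rintro rfl; simp at hy) (by rintro rfl; simp at hy)
  have htr : x + τ x = 1 := by
    rcases hfix (x + τ x) (by rw [map_add, hτ2, add_comm]) with h | h
    · have hτx : τ x = x := by linear_combination h - x * h2
      rcases hfix x hτx with h' | h'
      exacts [absurd h' hx0, absurd h' hx1]
    · exact h
  have hN : x * τ x = 1 := by
    rcases hfix (x * τ x) (by rw [map_mul, hτ2, mul_comm]) with h | h
    · simp [hx0] at h
    · exact h
  linear_combination x * htr - hN + x * h2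

lemma exists_ne_zero_one_add_mul_map_self_ne_zero (hτne : (⇑τ : K → K) ≠ id)
    (hτ2 : ∀ x, τ (τ x) = x) (hcard : Nat.card K ≠ 4) : ∃ a : K, a ≠ 0 ∧ 1 + a * τ a ≠ 0 := by
  by_contra! h
  have h2 : (2 : K) = 0 := by
    have := h 1 one_ne_zero
    rwa [map_one, mul_one, one_add_one_eq_two] at this
  refine hcard (card_eq_four_of_forall_map_eq_self hτne hτ2 h2 fun t ht => ?_)
  refine or_iff_not_imp_left.mpr fun ht0 => ?_
  have hN := h t ht0
  rw [ht] at hN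
  have hsq : (t - 1) * (t - 1) = 0 := by linear_combination hN - t * h2
  simpa [sub_eq_zero] using hsq

/-- Writing `N x = x * τ x`, the expression is `Ψ(w, w)` for the neighbour `w` of `v` in
`reachable_lineOf_single_zero`, with `a = N v₀`, `b = N v₁` and `m = τ v₁ * v₂`. Witnesses:
`α = 0` if `a ≠ b`; otherwise `α = ±1` in odd characteristic, and `α = s * y / m` in
characteristic `2`, where `τ y ≠ y` and `s` is `1` or a `τ`-fixed element outside `{0, 1}`. -/
lemma exists_mul_map_self_ne_neg_one (hτne : (⇑τ : K → K) ≠ id) (hτ2 : ∀ x, τ (τ x) = x)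
    (hcard : Nat.card K ≠ 4) (a b m : K) (ha : a ≠ 0) (hm : m ≠ 0) :
    ∃ α : K, α * τ α ≠ -1 ∧ α * τ α * (a + b) + (α * m + τ (α * m)) + (a - b) ≠ 0 := by
  by_cases hab : a = b
  swap
  · exact ⟨0, by simp, by simpa [sub_eq_zero] using hab⟩
  subst hab
  by_cases h2 : (2 : K) = 0
  · obtain ⟨y, hy⟩ := exists_map_ne_self hτne
    have htr : y + τ y ≠ 0 := fun h => hy (by linear_combination h - y * h2)
    have hgood : ∀ s : K, τ s = s → s ≠ 0 → s * (y * m⁻¹) * τ (s * (y * m⁻¹)) ≠ -1 →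
        ∃ α : K, α * τ α ≠ -1 ∧ α * τ α * (a + a) + (α * m + τ (α * m)) + (a - a) ≠ 0 := by
      refine fun s hs hs0 hN => ⟨_, hN, fun h => htr ?_⟩
      rw [show s * (y * m⁻¹) * m = s * y by field_simp, map_mul τ s y, hs] at h
      have : s * (y + τ y) = 0 := by
        linear_combination h - s * (y * m⁻¹) * τ (s * (y * m⁻¹)) * a * h2
      exact (mul_eq_zero.mp this).resolve_left hs0
    by_cases hN : y * m⁻¹ * τ (y * m⁻¹) = 1
    · obtain ⟨t, ht, ht0, ht1⟩ : ∃ t : K, τ t = t ∧ t ≠ 0 ∧ t ≠ 1 := by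
        by_contra! h
        exact hcard (card_eq_four_of_forall_map_eq_self hτne hτ2 h2 fun t ht =>
          or_iff_not_imp_left.mpr (h t ht))
      refine hgood t ht ht0 fun h => ht1 ?_
      rw [map_mul, ht, mul_mul_mul_comm, hN, mul_one] at h
      have : (t - 1) * (t - 1) = 0 := by linear_combination h - t * h2
      simpa [sub_eq_zero] using this
    · refine hgood 1 (map_one τ) one_ne_zero fun h => hN ?_
      rw [one_mul] at h
      linear_combination h - h2
  · have hN1 : (1 : K) * τ 1 ≠ -1 := fun h => h2 (by rw [map_one] at h; linear_combination h)
    by_cases h1 : 1 * τ 1 * (a + a) + (1 * m + τ (1 * m)) + (a - a) = 0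
    · refine ⟨-1, by simpa using hN1, fun h => ?_⟩
      simp only [map_neg, map_one, one_mul, neg_mul, map_neg] at h h1
      have : (2 : K) * (2 * a) = 0 := by linear_combination h + h1
      simp [h2, ha] at this
    · exact ⟨1, hN1, h1⟩

open Classical in
lemma Psi_self_eq_card_of_card_eq_four (hτne : (⇑τ : K → K) ≠ id) (hτ2 : ∀ x, τ (τ x) = x)
    (hcard : Nat.card K = 4) (v : Fin n → K) :
    Psi (⇑τ) v v = ((Finset.univ.filter fun i => v i ≠ 0).card : K) := by
  rw [Finset.natCast_card_filter, Psi]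
  refine Finset.sum_congr rfl fun i _ => ?_
  split_ifs with h
  · exact mul_map_self_eq_one_of_card_eq_four hτne hτ2 hcard h
  · simp [not_not.mp h]

open Classical in
lemma exists_forall_ne_eq_zero_of_card_eq_four (hτne : (⇑τ : K → K) ≠ id)
    (hτ2 : ∀ x, τ (τ x) = x) (hcard : Nat.card K = 4) {v : Fin n → K} (hv : Psi (⇑τ) v v ≠ 0)
    (hs : (Finset.univ.filter fun i => v i ≠ 0).card ≤ 2) : ∃ j, ∀ k ≠ j, v k = 0 := by
  rw [Psi_self_eq_card_of_card_eq_four hτne hτ2 hcard] at hv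
  have h1 : (Finset.univ.filter fun i => v i ≠ 0).card = 1 := by
    interval_cases h : (Finset.univ.filter fun i => v i ≠ 0).card
    · simp at hv
    · rfl
    · exact absurd (by exact_mod_cast two_eq_zero_of_card_eq_four hcard) hv
  obtain ⟨j, hj⟩ := Finset.card_eq_one.mp h1
  refine ⟨j, fun k hk => by_contra fun hvk => hk ?_⟩
  have : k ∈ Finset.univ.filter fun i => v i ≠ 0 := by simpa using hvk
  simpa [hj] using this

lemma reachable_lineOf_single_zero_of_tail (hτ2 : ∀ x, τ (τ x) = x) {v : Fin 3 → K}
    (hv : Psi (⇑τ) v v ≠ 0) (h : v 1 * τ (v 1) + v 2 * τ (v 2) ≠ 0) :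
    (FrameGraph τ hτ2 3).Reachable (lineOf hv) (lineOf (Psi_single_self 0)) := by
  have hw : Psi (⇑τ) ![0, τ (v 2), -τ (v 1)] ![0, τ (v 2), -τ (v 1)] ≠ 0 := by
    convert h using 1
    simp [Psi, Fin.sum_univ_three, hτ2]
    ring
  have hvw : Psi (⇑τ) v ![0, τ (v 2), -τ (v 1)] = 0 := by
    simp [Psi, Fin.sum_univ_three, hτ2]
    ring
  exact ((adj_lineOf_iff hτ2 hv hw).mpr hvw).reachable.trans
    ((adj_lineOf_iff hτ2 hw _).mpr (by simp [Psi_single_right])).reachable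

/-- When `N v₁ + N v₂ = 0` and `v ∉ K ∙ e₀`, the neighbour
`w = α (τ v₁, -τ v₀, 0) + (τ v₂, 0, -τ v₀)` of `v` has `N w₁ + N w₂ = (N α + 1) N v₀`, so it is
at distance two from `e₀` for a suitable `α`. -/
lemma reachable_lineOf_single_zero (hτne : (⇑τ : K → K) ≠ id) (hτ2 : ∀ x, τ (τ x) = x)
    (hcard : Nat.card K ≠ 4) {v : Fin 3 → K} (hv : Psi (⇑τ) v v ≠ 0) :
    (FrameGraph τ hτ2 3).Reachable (lineOf hv) (lineOf (Psi_single_self 0)) := by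
  by_cases hN : v 1 * τ (v 1) + v 2 * τ (v 2) = 0
  swap
  · exact reachable_lineOf_single_zero_of_tail hτ2 hv hN
  have ha : v 0 * τ (v 0) ≠ 0 := by
    have hexp : Psi (⇑τ) v v = v 0 * τ (v 0) + (v 1 * τ (v 1) + v 2 * τ (v 2)) := by
      simp [Psi, Fin.sum_univ_three, add_assoc]
    rwa [hexp, hN, add_zero] at hv
  by_cases hv1 : v 1 = 0
  · have hv2 : v 2 = 0 := by simpa [hv1] using hN
    rw [lineOf_eq_lineOf_single hv (j := 0) fun k hk => by fin_cases k <;> simp_all]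
  have hv2 : v 2 ≠ 0 := fun h => hv1 (by simpa [h] using hN)
  obtain ⟨α, hα, hαw⟩ := exists_mul_map_self_ne_neg_one hτne hτ2 hcard _ (v 1 * τ (v 1))
    (τ (v 1) * v 2) ha (by simp [hv1, hv2])
  have hw : Psi (⇑τ) ![α * τ (v 1) + τ (v 2), -(α * τ (v 0)), -τ (v 0)]
      ![α * τ (v 1) + τ (v 2), -(α * τ (v 0)), -τ (v 0)] ≠ 0 := by
    convert hαw using 1
    simp [Psi, Fin.sum_univ_three, hτ2]
    linear_combination hN
  have hvw : Psi (⇑τ) v ![α * τ (v 1) + τ (v 2), -(α * τ (v 0)), -τ (v 0)] = 0 := by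
    simp [Psi, Fin.sum_univ_three, hτ2]
    ring
  refine ((adj_lineOf_iff hτ2 hv hw).mpr hvw).reachable.trans
    (reachable_lineOf_single_zero_of_tail hτ2 hw ?_)
  have : (α * τ α + 1) * (v 0 * τ (v 0)) ≠ 0 :=
    mul_ne_zero (fun h => hα (by linear_combination h)) ha
  convert this using 1
  simp [hτ2]
  ring

lemma connected_three_of_card_ne_four (hτne : (⇑τ : K → K) ≠ id) (hτ2 : ∀ x, τ (τ x) = x)
    (hcard : Nat.card K ≠ 4) : (FrameGraph τ hτ2 3).Connected :=
  connected_of_forall_reachable_lineOf hτ2 (Psi_single_self 0) fun _ hv =>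
    reachable_lineOf_single_zero hτne hτ2 hcard hv

lemma connected_two_of_card_eq_four (hτne : (⇑τ : K → K) ≠ id) (hτ2 : ∀ x, τ (τ x) = x)
    (hcard : Nat.card K = 4) : (FrameGraph τ hτ2 2).Connected :=
  connected_of_forall_reachable_lineOf hτ2 (Psi_single_self 0) fun v hv => by
    classical
    obtain ⟨j, hj⟩ := exists_forall_ne_eq_zero_of_card_eq_four hτne hτ2 hcard hv
      ((Finset.card_filter_le _ _).trans (by simp))
    rw [lineOf_eq_lineOf_single hv hj]
    exact reachable_lineOf_single hτ2 j 0

lemma not_connected_two_of_card_ne_four (hτne : (⇑τ : K → K) ≠ id) (hτ2 : ∀ x, τ (τ x) = x)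
    (hcard : Nat.card K ≠ 4) : ¬ (FrameGraph τ hτ2 2).Connected := by
  obtain ⟨a, ha0, ha⟩ := exists_ne_zero_one_add_mul_map_self_ne_zero hτne hτ2 hcard
  refine not_connected_of_coordinate_lines_closed hτ2 0 (fun w _ ⟨i, hi⟩ => ?_) (v := ![1, a])
    (by simpa [Psi] using ha) fun j => ?_
  · fin_cases i
    · exact ⟨1, fun k hk => by fin_cases k <;> simp_all⟩
    · exact ⟨0, fun k hk => by fin_cases k <;> simp_all⟩
  · fin_cases j
    · exact ⟨1, by decide, by simpa using ha0⟩
    · exact ⟨0, by decide, by simp⟩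

lemma not_connected_three_of_card_eq_four (hτne : (⇑τ : K → K) ≠ id) (hτ2 : ∀ x, τ (τ x) = x)
    (hcard : Nat.card K = 4) : ¬ (FrameGraph τ hτ2 3).Connected := by
  have hv : Psi (⇑τ) (fun _ : Fin 3 => (1 : K)) (fun _ => 1) = 1 := by
    simp only [Psi, map_one, mul_one, Fin.sum_univ_three]
    linear_combination two_eq_zero_of_card_eq_four hcard
  refine not_connected_of_coordinate_lines_closed hτ2 0 (fun w hw ⟨i, hi⟩ =>
    exists_forall_ne_eq_zero_of_card_eq_four hτne hτ2 hcard hw ?_) (hv ▸ one_ne_zero)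
    fun j => ⟨j + 1, by fin_cases j <;> decide, one_ne_zero⟩
  classical
  calc (Finset.univ.filter fun k => w k ≠ 0).card ≤ (Finset.univ.erase i).card :=
        Finset.card_le_card fun k hk => Finset.mem_erase.mpr
          ⟨fun h => by simp [h, hi] at hk, Finset.mem_univ k⟩
    _ = 2 := by simp

end

theorem statement0_general (τ : K →+* K) (hτne : (⇑τ : K → K) ≠ id) (hτ2 : ∀ x, τ (τ x) = x)
    (n : ℕ) (hn : 2 ≤ n) :
    (FrameGraph τ hτ2 n).Connected ↔
      ((n = 2 ∧ Nat.card K = 4) ∨ (n = 3 ∧ Nat.card K ≠ 4) ∨ 4 ≤ n) := by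
  obtain rfl | rfl | hn4 : n = 2 ∨ n = 3 ∨ 4 ≤ n := by omega
  · by_cases hcard : Nat.card K = 4
    · exact iff_of_true (connected_two_of_card_eq_four hτne hτ2 hcard) (by simp [hcard])
    · exact iff_of_false (not_connected_two_of_card_ne_four hτne hτ2 hcard) (by simp [hcard])
  · by_cases hcard : Nat.card K = 4
    · exact iff_of_false (not_connected_three_of_card_eq_four hτne hτ2 hcard) (by simp [hcard])
    · exact iff_of_true (connected_three_of_card_ne_four hτne hτ2 hcard) (by simp [hcard])
  · exact iff_of_true (connected_of_four_le hτne hτ2 hn4) (by omega)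

/-- For `n ≥ 2`, under condition (ON), the graph `G(V)` is connected
if and only if (a) `n = 2` and `K` has exactly `4` elements, or (b) `n = 3` and `K` does
not have exactly `4` elements, or (c) `n ≥ 4`. -/
theorem statement0 (τ : K →+* K) (hτne : (⇑τ : K → K) ≠ id) (hτ2 : ∀ x, τ (τ x) = x)
    (n : ℕ) (hn : 2 ≤ n)
    (hON : ∀ v : Fin n → K, ∃ x : K, Psi (⇑τ) v v = x * τ x) :
    (FrameGraph τ hτ2 n).Connected ↔
      ((n = 2 ∧ Nat.card K = 4) ∨ (n = 3 ∧ Nat.card K ≠ 4) ∨ 4 ≤ n) :=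
  statement0_general τ hτne hτ2 n hn

end FramePaper
end

section
/- Let W be a finite-dimensional K-vector space with a Hermitian form Φ (Φ is additive and K-linear in the first variable and Φ(w,v) = τ(Φ(v,w)) for all v,w). Let Rad(W) = {v ∈ W : Φ(v,w) = 0 for all w ∈ W}, and let W' be a K-subspace of W with W = Rad(W) ⊕ W' (internal direct sum). Assume dim W' ≥ 2. Define the graph G(W,Φ) with vertices the 1-dimensional subspaces S of W containing a vector v with Φ(v,v) ≠ 0, two vertices S, T adjacent iff S ≠ T and Φ(s,t) = 0 for all s ∈ S, t ∈ T; define G(W',Φ) analogously using the restriction of Φ to W'. Then G(W,Φ) is connected if and only if G(W',Φ) is connected. -/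
/-!
Modulo the radical `R`, the form only sees the projection `π : W → W'` along `R`, so
`S ↦ π S` and the inclusion `S' ↦ S'` are adjacency-preserving and -reflecting maps between
the two graphs, with `π ∘ incl = id`. Hence `π` is a surjective homomorphism, which transports
connectedness from `G(W)` to `G(W')`. Conversely, if `G(W')` is connected, then it has no
isolated vertex (since `dim W' ≥ 2` it has two vertices), and a neighbour `N'` of `π S`
gives a path `S — N' — π S` in `G(W)`, so every vertex of `G(W)` is joined to the copy of
`G(W')`.
-/

namespace FramePaper

variable {K : Type*} [Field K]

/-- The orthogonality graph of a Hermitian form `Φ` on a `K`-module `M`: vertices are the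
`1`-dimensional subspaces containing a vector `v` with `Φ(v,v) ≠ 0`, with `S, T` adjacent
iff `S ≠ T` and `Φ(s,t) = 0` for all `s ∈ S`, `t ∈ T`. -/
def HermGraph (τ : K →+* K) {M : Type*} [AddCommGroup M] [Module K M]
    (Φ : M → M → K) (hherm : ∀ v w, Φ w v = τ (Φ v w)) :
    SimpleGraph {S : Submodule K M // Module.finrank K S = 1 ∧ ∃ v ∈ S, Φ v v ≠ 0} where
  Adj S T := S ≠ T ∧ ∀ s ∈ S.1, ∀ t ∈ T.1, Φ s t = 0
  symm := ⟨by
    rintro S T ⟨hne, h⟩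
    exact ⟨hne.symm, fun t ht s hs => by rw [hherm, h s hs t ht, map_zero]⟩⟩
  loopless := ⟨fun S h => h.1 rfl⟩

theorem _root_.SimpleGraph.Connected.of_retraction {V U : Type*} [Nontrivial U]
    {G : SimpleGraph V} {H : SimpleGraph U} (hH : H.Connected) (p : G →g H) (i : H →g G)
    (hpi : ∀ y, p (i y) = y) (hp : ∀ {x x'}, H.Adj (p x) (p x') → G.Adj x x') :
    G.Connected := by
  have hround : ∀ x, G.Reachable x (i (p x)) := fun x => by
    obtain ⟨z, hz⟩ := hH.preconnected.exists_adj_of_nontrivial (p x)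
    have hxz : G.Adj x (i z) := hp (by rwa [hpi])
    exact hxz.reachable.trans (i.map_adj hz.symm).reachable
  rw [SimpleGraph.connected_iff]
  exact ⟨fun x y => (hround x).trans (((hH.preconnected (p x) (p y)).map i).trans
    (hround y).symm), hH.nonempty.map i⟩

section Form

variable {M : Type*} [AddCommGroup M] {Φ : M → M → K}

lemma apply_add_right {τ : K →+* K} (hadd : ∀ a b w, Φ (a + b) w = Φ a w + Φ b w)
    (hherm : ∀ v w, Φ w v = τ (Φ v w)) (w a b : M) : Φ w (a + b) = Φ w a + Φ w b := by
  rw [hherm, hadd, map_add, ← hherm, ← hherm]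

variable [Module K M]

lemma apply_zero_left (hsmul : ∀ (c : K) (a w : M), Φ (c • a) w = c * Φ a w) (w : M) :
    Φ 0 w = 0 := by
  simpa using hsmul 0 0 w

lemma ne_zero_of_apply_self_ne_zero (hsmul : ∀ (c : K) (a w : M), Φ (c • a) w = c * Φ a w)
    {v : M} (hv : Φ v v ≠ 0) : v ≠ 0 := by
  rintro rfl
  exact hv (apply_zero_left hsmul 0)

lemma apply_eq_apply_projection {τ : K →+* K} {R W' : Submodule K M}
    (hadd : ∀ a b w, Φ (a + b) w = Φ a w + Φ b w) (hherm : ∀ v w, Φ w v = τ (Φ v w))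
    (hR : ∀ r ∈ R, ∀ w, Φ r w = 0) (hcompl : IsCompl R W') (v w : M) :
    Φ v w = Φ (W'.projection R hcompl.symm v) (W'.projection R hcompl.symm w) := by
  have hleft : ∀ x y, Φ x y = Φ (W'.projection R hcompl.symm x) y := fun x y => by
    conv_lhs => rw [← Submodule.projection_add_projection_eq_self hcompl.symm x]
    rw [hadd, hR _ (Submodule.projection_apply_mem _ x), add_zero]
  rw [hleft, hherm, hleft, ← hherm]

lemma exists_ne_zero_apply_eq_zero (hadd : ∀ a b w, Φ (a + b) w = Φ a w + Φ b w)
    (hsmul : ∀ (c : K) (a w : M), Φ (c • a) w = c * Φ a w)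
    (hdim : 2 ≤ Module.finrank K M) (v : M) : ∃ u ≠ 0, Φ u v = 0 := by
  let L : M →ₗ[K] K :=
    { toFun := fun w => Φ w v
      map_add' := fun a b => hadd a b v
      map_smul' := fun c a => hsmul c a v }
  have hL : ¬Function.Injective L := fun hinj => by
    have := LinearMap.finrank_le_finrank_of_injective hinj
    rw [Module.finrank_self] at this
    omega
  obtain ⟨u, hu, hu0⟩ := Submodule.exists_mem_ne_zero_of_ne_bot (mt LinearMap.ker_eq_bot.mp hL)
  exact ⟨u, hu0, hu⟩

lemma exists_apply_self_ne_zero_notMem_span {τ : K →+* K}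
    (hadd : ∀ a b w, Φ (a + b) w = Φ a w + Φ b w)
    (hsmul : ∀ (c : K) (a w : M), Φ (c • a) w = c * Φ a w)
    (hherm : ∀ v w, Φ w v = τ (Φ v w)) (hdim : 2 ≤ Module.finrank K M)
    {v : M} (hv : Φ v v ≠ 0) : ∃ w, Φ w w ≠ 0 ∧ w ∉ K ∙ v := by
  obtain ⟨u, hu0, huv⟩ := exists_ne_zero_apply_eq_zero hadd hsmul hdim v
  have hvu : Φ v u = 0 := by rw [hherm, huv, map_zero]
  have hu : u ∉ K ∙ v := by
    intro hmem
    obtain ⟨c, rfl⟩ := Submodule.mem_span_singleton.mp hmem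
    rw [hsmul, mul_eq_zero] at huv
    exact hu0 (by rw [huv.resolve_right hv, zero_smul])
  by_cases huu : Φ u u = 0
  · refine ⟨v + u, ?_, fun h => hu ?_⟩
    · rwa [hadd, apply_add_right hadd hherm, apply_add_right hadd hherm, hvu, huv, huu,
        add_zero, add_zero, add_zero]
    · simpa using Submodule.sub_mem _ h (Submodule.mem_span_singleton_self v)
  · exact ⟨u, huu, hu⟩

end Form

section Graph

variable {M N : Type*} [AddCommGroup M] [Module K M] [AddCommGroup N] [Module K N]
  {Φ : M → M → K} {Ψ : N → N → K}

abbrev HermVertex (Φ : M → M → K) : Type _ :=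
  {S : Submodule K M // Module.finrank K S = 1 ∧ ∃ v ∈ S, Φ v v ≠ 0}

def HermVertex.span (hsmul : ∀ (c : K) (a w : M), Φ (c • a) w = c * Φ a w) {v : M}
    (hv : Φ v v ≠ 0) : HermVertex Φ :=
  ⟨K ∙ v, finrank_span_singleton (ne_zero_of_apply_self_ne_zero hsmul hv), v,
    Submodule.mem_span_singleton_self v, hv⟩

lemma HermVertex.exists_eq_span (hsmul : ∀ (c : K) (a w : M), Φ (c • a) w = c * Φ a w)
    (S : HermVertex Φ) : ∃ v, Φ v v ≠ 0 ∧ S.1 = K ∙ v := by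
  obtain ⟨v, hvS, hv⟩ := S.2.2
  have : FiniteDimensional K S.1 := Module.finite_of_finrank_pos (by rw [S.2.1]; exact one_pos)
  have hle : K ∙ v ≤ S.1 := (Submodule.span_singleton_le_iff_mem _ _).2 hvS
  refine ⟨v, hv, (Submodule.eq_of_le_of_finrank_eq hle ?_).symm⟩
  rw [finrank_span_singleton (ne_zero_of_apply_self_ne_zero hsmul hv), S.2.1]

lemma HermVertex.nontrivial {τ : K →+* K} (hadd : ∀ a b w, Φ (a + b) w = Φ a w + Φ b w)
    (hsmul : ∀ (c : K) (a w : M), Φ (c • a) w = c * Φ a w)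
    (hherm : ∀ v w, Φ w v = τ (Φ v w)) (hdim : 2 ≤ Module.finrank K M)
    [Nonempty (HermVertex Φ)] : Nontrivial (HermVertex Φ) := by
  obtain ⟨S⟩ := ‹Nonempty (HermVertex Φ)›
  obtain ⟨v, hv, hS⟩ := S.exists_eq_span hsmul
  obtain ⟨w, hw, hwv⟩ := exists_apply_self_ne_zero_notMem_span hadd hsmul hherm hdim hv
  refine ⟨⟨S, HermVertex.span hsmul hw, fun h => hwv ?_⟩⟩
  rw [← hS, h]
  exact Submodule.mem_span_singleton_self w

lemma HermGraph.adj_iff {τ : K →+* K} {hherm : ∀ v w, Φ w v = τ (Φ v w)}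
    {S T : HermVertex Φ} :
    (HermGraph τ Φ hherm).Adj S T ↔ ∀ s ∈ S.1, ∀ t ∈ T.1, Φ s t = 0 := by
  refine ⟨And.right, fun h => ⟨?_, h⟩⟩
  rintro rfl
  obtain ⟨v, hvS, hv⟩ := S.2.2
  exact hv (h v hvS v hvS)

def HermVertex.map (hsmul : ∀ (c : K) (a w : M), Φ (c • a) w = c * Φ a w) (f : M →ₗ[K] N)
    (hf : ∀ v w, Φ v w = Ψ (f v) (f w)) (S : HermVertex Φ) : HermVertex Ψ :=
  ⟨S.1.map f, by
    obtain ⟨v, hv, hS⟩ := S.exists_eq_span hsmul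
    have hfv : f v ≠ 0 := fun h0 => hv (by
      rw [hf, h0, ← f.map_zero, ← hf, apply_zero_left hsmul])
    rw [hS, Submodule.map_span, Set.image_singleton]
    exact ⟨finrank_span_singleton hfv, f v, Submodule.mem_span_singleton_self _, hf v v ▸ hv⟩⟩

lemma HermVertex.map_map_eq_self (hsmulΦ : ∀ (c : K) (a w : M), Φ (c • a) w = c * Φ a w)
    (hsmulΨ : ∀ (c : K) (a w : N), Ψ (c • a) w = c * Ψ a w) {f : M →ₗ[K] N} {g : N →ₗ[K] M}
    (hf : ∀ v w, Φ v w = Ψ (f v) (f w)) (hg : ∀ v w, Ψ v w = Φ (g v) (g w))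
    (hgf : g ∘ₗ f = LinearMap.id) (S : HermVertex Φ) :
    (S.map hsmulΦ f hf).map hsmulΨ g hg = S :=
  Subtype.ext (by simp only [HermVertex.map, ← Submodule.map_comp, hgf, Submodule.map_id])

lemma HermVertex.map_adj_iff {τ : K →+* K} {hΦ : ∀ v w, Φ w v = τ (Φ v w)}
    {hΨ : ∀ v w, Ψ w v = τ (Ψ v w)} (hsmul : ∀ (c : K) (a w : M), Φ (c • a) w = c * Φ a w)
    (f : M →ₗ[K] N) (hf : ∀ v w, Φ v w = Ψ (f v) (f w)) {S T : HermVertex Φ} :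
    (HermGraph τ Ψ hΨ).Adj (S.map hsmul f hf) (T.map hsmul f hf) ↔
      (HermGraph τ Φ hΦ).Adj S T := by
  simp only [HermGraph.adj_iff, HermVertex.map, Submodule.mem_map, forall_exists_index,
    and_imp, forall_apply_eq_imp_iff₂, hf]

def HermGraph.map {τ : K →+* K} {hΦ : ∀ v w, Φ w v = τ (Φ v w)}
    {hΨ : ∀ v w, Ψ w v = τ (Ψ v w)} (hsmul : ∀ (c : K) (a w : M), Φ (c • a) w = c * Φ a w)
    (f : M →ₗ[K] N) (hf : ∀ v w, Φ v w = Ψ (f v) (f w)) :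
    HermGraph τ Φ hΦ →g HermGraph τ Ψ hΨ where
  toFun := HermVertex.map hsmul f hf
  map_rel' := (HermVertex.map_adj_iff hsmul f hf).2

end Graph

theorem statement14_general (τ : K →+* K)
    {W : Type*} [AddCommGroup W] [Module K W]
    (Φ : W → W → K)
    (hadd : ∀ a b w, Φ (a + b) w = Φ a w + Φ b w)
    (hsmul : ∀ (c : K) (a w : W), Φ (c • a) w = c * Φ a w)
    (hherm : ∀ v w, Φ w v = τ (Φ v w))
    (R : Submodule K W) (hR : ∀ v, v ∈ R ↔ ∀ w, Φ v w = 0)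
    (W' : Submodule K W) (hcompl : IsCompl R W')
    (hdim : 2 ≤ Module.finrank K W') :
    (HermGraph τ Φ hherm).Connected ↔
      (HermGraph τ (fun a b : W' => Φ a.1 b.1)
        (fun v w => hherm v.1 w.1)).Connected := by
  let Φ' : W' → W' → K := fun a b => Φ a b
  have hsmul' : ∀ (c : K) (a w : W'), Φ' (c • a) w = c * Φ' a w := fun c a w => hsmul c a w
  have hπ : ∀ v w, Φ v w = Φ' (W'.projectionOnto R hcompl.symm v)
      (W'.projectionOnto R hcompl.symm w) :=
    apply_eq_apply_projection hadd hherm (fun r hr => (hR r).1 hr) hcompl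
  have hι : ∀ v w : W', Φ' v w = Φ (W'.subtype v) (W'.subtype w) := fun _ _ => rfl
  let p : HermGraph τ Φ hherm →g HermGraph τ Φ' (fun v w => hherm v.1 w.1) :=
    HermGraph.map hsmul _ hπ
  let ι : HermGraph τ Φ' (fun v w => hherm v.1 w.1) →g HermGraph τ Φ hherm :=
    HermGraph.map hsmul' _ hι
  have hpι : ∀ S, p (ι S) = S := HermVertex.map_map_eq_self hsmul' hsmul hι hπ
    (Submodule.projectionOnto_comp_subtype hcompl.symm)
  refine ⟨fun h => h.map p fun S => ⟨ι S, hpι S⟩, fun h => ?_⟩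
  have := h.nonempty
  have := HermVertex.nontrivial (Φ := Φ') (fun a b w => hadd a b w) hsmul'
    (fun v w => hherm v w) hdim
  exact h.of_retraction p ι hpι (HermVertex.map_adj_iff hsmul _ hπ).1

/-- Let `W` be a finite-dimensional `K`-vector space with a Hermitian
form `Φ`, let `R = Rad(W)` be its radical and `W'` a complement of `R` in `W` with
`dim W' ≥ 2`. Then `G(W,Φ)` is connected iff `G(W',Φ|_{W'})` is connected. -/
theorem statement14 (τ : K →+* K) (hτne : (⇑τ : K → K) ≠ id) (hτ2 : ∀ x, τ (τ x) = x)
    {W : Type*} [AddCommGroup W] [Module K W] [FiniteDimensional K W]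
    (Φ : W → W → K)
    (hadd : ∀ a b w, Φ (a + b) w = Φ a w + Φ b w)
    (hsmul : ∀ (c : K) (a w : W), Φ (c • a) w = c * Φ a w)
    (hherm : ∀ v w, Φ w v = τ (Φ v w))
    (R : Submodule K W) (hR : ∀ v, v ∈ R ↔ ∀ w, Φ v w = 0)
    (W' : Submodule K W) (hcompl : IsCompl R W')
    (hdim : 2 ≤ Module.finrank K W') :
    (HermGraph τ Φ hherm).Connected ↔
      (HermGraph τ (fun a b : W' => Φ a.1 b.1)
        (fun v w => hherm v.1 w.1)).Connected :=
  statement14_general τ Φ hadd hsmul hherm R hR W' hcompl hdim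

end FramePaper
end

section
/- Let F be a finite field with q elements, n ≥ 2, and p a prime with p ∣ q − 1 and p ∤ n. Let G = GL_n(F) be the group of invertible n×n matrices over F, L ≤ G the subgroup of matrices of determinant 1, and Z ≤ G the subgroup of scalar matrices λ·I with λ^p = 1 (a central subgroup of order p). Call a subgroup H ≤ G (resp. H ≤ L) elementary abelian p if H is commutative and every h ∈ H satisfies h^p = 1. Then the assignments B ↦ Z ⊔ B and A ↦ A ⊓ L are mutually inverse, inclusion-preserving bijections between the set of nontrivial elementary abelian p-subgroups of L and the set of elementary abelian p-subgroups A of G with Z < A. In particular, every elementary abelian p-subgroup A of G with Z < A satisfies A = Z ⊔ (A ⊓ L) with Z ⊓ (A ⊓ L) trivial and A ⊓ L nontrivial. -/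
namespace FramePaper

open Pointwise

/-- A subgroup `H` is elementary abelian `p` if it is commutative and every element
satisfies `h ^ p = 1`. -/
def IsElemAbelianP (p : ℕ) {G : Type*} [Group G] (H : Subgroup G) : Prop :=
  (∀ a ∈ H, ∀ b ∈ H, a * b = b * a) ∧ ∀ h ∈ H, h ^ p = 1

/-- In a commutative group, if `d ^ p = 1` and `n` is coprime to `p`, then `d` has an
`n`-th root which is also a `p`-torsion element. -/
lemma exists_pow_root {G : Type*} [CommGroup G] {n p : ℕ} (hco : IsCoprime (n : ℤ) (p : ℤ))
    {d : G} (hd : d ^ p = 1) : ∃ c : G, c ^ p = 1 ∧ c ^ n = d := by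
  obtain ⟨x, y, h⟩ := hco
  refine ⟨d ^ x, ?_, ?_⟩
  · rw [← zpow_natCast (d ^ x) p, ← zpow_mul, mul_comm, zpow_mul, zpow_natCast, hd, one_zpow]
  · rw [← zpow_natCast (d ^ x) n, ← zpow_mul]
    have hxn : (x * n : ℤ) = 1 - y * p := by linarith
    rw [hxn, zpow_sub, zpow_one, mul_comm y (p : ℤ), zpow_mul, zpow_natCast, hd, one_zpow,
            inv_one, mul_one]

/-- If `c ^ p = 1` and `c ^ n = 1` with `n` coprime to `p`, then `c = 1`. -/
lemma eq_one_of_pow_eq_one {G : Type*} [Group G] {n p : ℕ} (hco : Nat.Coprime n p)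
    {c : G} (h1 : c ^ p = 1) (h2 : c ^ n = 1) : c = 1 := by
  have d1 := orderOf_dvd_of_pow_eq_one h1
  have d2 := orderOf_dvd_of_pow_eq_one h2
  have : orderOf c ∣ 1 := hco ▸ Nat.dvd_gcd d2 d1
  exact orderOf_eq_one_iff.mp (Nat.dvd_one.mp this)

/-- The scalar matrix `c • 1` as an element of `GL n F`. -/
def scalarGL {F : Type*} [Field F] (n : ℕ) (c : Fˣ) : GL (Fin n) F :=
  ⟨(c : F) • 1, ((c⁻¹ : Fˣ) : F) • 1,
    by rw [smul_mul_smul_comm, one_mul, Units.mul_inv, one_smul],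
    by rw [smul_mul_smul_comm, one_mul, Units.inv_mul, one_smul]⟩

/-- Let `F` be a finite field with `q` elements, `n ≥ 2`, `p` a prime
with `p ∣ q - 1` and `p ∤ n`. Let `G = GL_n(F)`, `L` the subgroup of determinant-one
matrices and `Z` the subgroup of scalar matrices `λ • 1` with `λ ^ p = 1`. Then
`B ↦ Z ⊔ B` and `A ↦ A ⊓ L` are mutually inverse, inclusion-preserving bijections
between the nontrivial elementary abelian `p`-subgroups of `L` and the elementary abelian
`p`-subgroups `A` of `G` with `Z < A`; in particular any such `A` satisfies
`A = Z ⊔ (A ⊓ L)` with `Z ⊓ (A ⊓ L)` trivial and `A ⊓ L` nontrivial. -/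
theorem statement17 {F : Type*} [Field F] [Fintype F] (q n p : ℕ)
    (hq : Fintype.card F = q) (hn : 2 ≤ n) (hp : p.Prime)
    (hpq : p ∣ q - 1) (hpn : ¬ p ∣ n)
    (L : Subgroup (GL (Fin n) F))
    (hL : ∀ A : GL (Fin n) F, A ∈ L ↔ Matrix.det (A : Matrix (Fin n) (Fin n) F) = 1)
    (Z : Subgroup (GL (Fin n) F))
    (hZ : ∀ A : GL (Fin n) F, A ∈ Z ↔
      ∃ c : F, c ^ p = 1 ∧ (A : Matrix (Fin n) (Fin n) F) = c • (1 : Matrix (Fin n) (Fin n) F)) :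
    (∀ B B' : Subgroup (GL (Fin n) F), B ≤ L → B' ≤ L → B ≤ B' → Z ⊔ B ≤ Z ⊔ B') ∧
    (∀ A A' : Subgroup (GL (Fin n) F), A ≤ A' → A ⊓ L ≤ A' ⊓ L) ∧
    (∀ B : Subgroup (GL (Fin n) F), B ≤ L → B ≠ ⊥ → IsElemAbelianP p B →
      IsElemAbelianP p (Z ⊔ B) ∧ Z < Z ⊔ B ∧ (Z ⊔ B) ⊓ L = B) ∧
    (∀ A : Subgroup (GL (Fin n) F), IsElemAbelianP p A → Z < A →
      A ⊓ L ≤ L ∧ A ⊓ L ≠ ⊥ ∧ IsElemAbelianP p (A ⊓ L) ∧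
      Z ⊔ (A ⊓ L) = A ∧ Z ⊓ (A ⊓ L) = ⊥) := by
  -- coprimality of `n` and `p`
  have hcop : Nat.Coprime n p := (hp.coprime_iff_not_dvd.mpr hpn).symm
  have hico : IsCoprime (n : ℤ) (p : ℤ) := Nat.isCoprime_iff_coprime.mpr hcop
  -- elements of `Z` are central
  have hZc : ∀ z ∈ Z, ∀ g : GL (Fin n) F, z * g = g * z := by
    intro z hz g
    obtain ⟨c, hcp, hcv⟩ := (hZ z).mp hz
    apply Units.ext
    rw [Units.val_mul, Units.val_mul, hcv, smul_mul_assoc, mul_smul_comm, one_mul, mul_one]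
  have hZnormal : Z.Normal := by
    constructor
    intro z hz g
    rw [← hZc z hz g, mul_assoc, mul_inv_cancel, mul_one]
    exact hz
  -- elements of `Z` are `p`-torsion
  have hZpow : ∀ z ∈ Z, z ^ p = 1 := by
    intro z hz
    obtain ⟨c, hcp, hcv⟩ := (hZ z).mp hz
    apply Units.ext
    rw [Units.val_pow_eq_pow_val, hcv, smul_pow, one_pow, hcp, one_smul, Units.val_one]
  -- `Z ⊓ L = ⊥`
  have hZL : Z ⊓ L = ⊥ := by
    rw [eq_bot_iff]
    intro z hzm
    obtain ⟨hz, hzL⟩ := hzm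
    obtain ⟨c, hcp, hcv⟩ := (hZ z).mp hz
    have hdet : (z : Matrix (Fin n) (Fin n) F).det = 1 := (hL z).mp hzL
    rw [hcv, Matrix.det_smul, Matrix.det_one, mul_one, Fintype.card_fin] at hdet
    have hc0 : c ≠ 0 := by
      intro h
      rw [h, zero_pow hp.pos.ne'] at hcp
      exact zero_ne_one hcp
    have hu : (Units.mk0 c hc0 : Fˣ) = 1 := by
      refine eq_one_of_pow_eq_one hcop ?_ ?_
      · exact Units.ext (by rw [Units.val_pow_eq_pow_val]; exact hcp)
      · exact Units.ext (by rw [Units.val_pow_eq_pow_val]; exact hdet)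
    have hc1 : c = 1 := by
      have := congrArg Units.val hu
      simpa using this
    have : z = 1 := Units.ext (by rw [hcv, hc1, one_smul, Units.val_one])
    rw [this]
    exact Subgroup.one_mem ⊥
  -- decomposition of elements of `Z ⊔ B`
  have hsup : ∀ (B : Subgroup (GL (Fin n) F)), ∀ x ∈ Z ⊔ B,
      ∃ z ∈ Z, ∃ b ∈ B, x = z * b := by
    intro B x hx
    have hx' : x ∈ ((Z : Set (GL (Fin n) F)) * (B : Set (GL (Fin n) F))) := by
      rw [← Subgroup.normal_mul Z B]
      exact hx
    obtain ⟨z, hz, b, hb, h⟩ := Set.mem_mul.mp hx'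
    exact ⟨z, hz, b, hb, h.symm⟩
  -- the scalar unit is in `Z` whenever its `p`-th power is 1
  have hscal : ∀ c : Fˣ, c ^ p = 1 → scalarGL n c ∈ Z := by
    intro c hc
    refine (hZ _).mpr ⟨(c : F), ?_, rfl⟩
    rw [← Units.val_pow_eq_pow_val, hc, Units.val_one]
  -- decomposition of elements of an elementary abelian `A` containing `Z`
  have hdec : ∀ (A : Subgroup (GL (Fin n) F)), (∀ h ∈ A, h ^ p = 1) → Z ≤ A →
      ∀ a ∈ A, ∃ z ∈ Z, ∃ b ∈ A ⊓ L, a = z * b := by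
    intro A hApow hZA a ha
    have hdu : IsUnit ((a : Matrix (Fin n) (Fin n) F).det) :=
      (Matrix.isUnit_iff_isUnit_det _).mp a.isUnit
    set du : Fˣ := hdu.unit with hdu_def
    have hduval : (du : F) = (a : Matrix (Fin n) (Fin n) F).det := hdu.unit_spec
    have hdup : du ^ p = 1 := by
      apply Units.ext
      rw [Units.val_pow_eq_pow_val, hduval, Units.val_one, ← Matrix.det_pow]
      have : ((a ^ p : GL (Fin n) F) : Matrix (Fin n) (Fin n) F) = 1 := by
        rw [hApow a ha, Units.val_one]
      rw [← Units.val_pow_eq_pow_val, this, Matrix.det_one]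
    obtain ⟨c, hc1, hc2⟩ := exists_pow_root hico hdup
    refine ⟨scalarGL n c, hscal c hc1, (scalarGL n c)⁻¹ * a, ⟨?_, ?_⟩, by group⟩
    · exact Subgroup.mul_mem A (Subgroup.inv_mem A (hZA (hscal c hc1))) ha
    · refine (hL _).mpr ?_
      have hval : (((scalarGL n c)⁻¹ : GL (Fin n) F) : Matrix (Fin n) (Fin n) F)
          = ((c⁻¹ : Fˣ) : F) • (1 : Matrix (Fin n) (Fin n) F) := rfl
      rw [Units.val_mul, hval, Matrix.det_mul, Matrix.det_smul, Matrix.det_one, mul_one,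
        Fintype.card_fin, ← hduval, ← Units.val_pow_eq_pow_val, inv_pow, hc2]
      rw [← Units.val_mul, inv_mul_cancel, Units.val_one]
  refine ⟨?_, ?_, ?_, ?_⟩
  · intro B B' _ _ h
    exact sup_le_sup_left h Z
  · intro A A' h
    exact inf_le_inf h le_rfl
  · rintro B hBL hBne ⟨hBcomm, hBpow⟩
    have hZBL : (Z ⊔ B) ⊓ L = B := by
      apply le_antisymm
      · intro x hxm
        obtain ⟨hx, hxL⟩ := hxm
        obtain ⟨z, hz, b, hb, rfl⟩ := hsup B _ hx
        have hzL : z ∈ L := by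
          have : z = (z * b) * b⁻¹ := by group
          rw [this]
          exact Subgroup.mul_mem L hxL (Subgroup.inv_mem L (hBL hb))
        have : z ∈ Z ⊓ L := ⟨hz, hzL⟩
        rw [hZL] at this
        rw [Subgroup.mem_bot] at this
        rw [this, one_mul]
        exact hb
      · exact le_inf le_sup_right hBL
    refine ⟨⟨?_, ?_⟩, ?_, hZBL⟩
    · -- commutativity of `Z ⊔ B`
      intro x hx y hy
      obtain ⟨z, hz, b, hb, rfl⟩ := hsup B x hx
      obtain ⟨z', hz', b', hb', rfl⟩ := hsup B y hy
      have c1 : Commute b z' := ((hZc z' hz' b)).symm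
      have c2 : Commute b' z := (hZc z hz b').symm
      rw [Commute.mul_mul_mul_comm c1, Commute.mul_mul_mul_comm c2,
        hZc z hz z', hBcomm b hb b' hb']
    · -- `p`-torsion of `Z ⊔ B`
      intro x hx
      obtain ⟨z, hz, b, hb, rfl⟩ := hsup B x hx
      have c : Commute z b := hZc z hz b
      rw [c.mul_pow, hZpow z hz, hBpow b hb, one_mul]
    · -- `Z < Z ⊔ B`
      refine lt_of_le_of_ne le_sup_left ?_
      intro h
      obtain ⟨⟨b, hb⟩, hbne'⟩ := Subgroup.ne_bot_iff_exists_ne_one.mp hBne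
      have hbne : b ≠ 1 := fun hb1 => hbne' (Subtype.ext hb1)
      have hbz : (b : GL (Fin n) F) ∈ Z := by
        rw [h]
        exact Subgroup.mem_sup_right hb
      have : (b : GL (Fin n) F) ∈ Z ⊓ L := ⟨hbz, hBL hb⟩
      rw [hZL, Subgroup.mem_bot] at this
      exact hbne this
  · rintro A ⟨hAcomm, hApow⟩ hZA
    have hdecA := hdec A hApow hZA.le
    refine ⟨inf_le_right, ?_, ⟨?_, ?_⟩, ?_, ?_⟩
    · -- `A ⊓ L ≠ ⊥`
      intro hbot
      obtain ⟨a, ha, hanz⟩ := SetLike.exists_of_lt hZA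
      obtain ⟨z, hz, b, hb, rfl⟩ := hdecA a ha
      rw [hbot, Subgroup.mem_bot] at hb
      rw [hb, mul_one] at hanz
      exact hanz hz
    · exact fun a ha b hb => hAcomm a ha.1 b hb.1
    · exact fun h hh => hApow h hh.1
    · -- `Z ⊔ (A ⊓ L) = A`
      apply le_antisymm
      · exact sup_le hZA.le inf_le_left
      · intro a ha
        obtain ⟨z, hz, b, hb, rfl⟩ := hdecA a ha
        exact Subgroup.mul_mem _ (Subgroup.mem_sup_left hz) (Subgroup.mem_sup_right hb)
    · -- `Z ⊓ (A ⊓ L) = ⊥`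
      rw [eq_bot_iff, ← hZL]
      exact inf_le_inf le_rfl inf_le_right

end FramePaper
end
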